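/- arXiv:2209.00457 — 2 statements merged into one kernel-verified Lean document; each statement's English description precedes it below -/
import Mathlib

section
/- Let τ > 0, σ > 1, M_p = p^{τ p^σ}, M_0 = 1, and m_p = M_p/M_{p−1} for p ≥ 1. Then for all p ≥ 2: (e/2^σ)^{τ p^{σ−1}/2^{σ−1}} · p^{τ σ p^{σ−1}/2^{σ−1}} ≤ m_p ≤ e^{τ p^{σ−1}} · p^{τ σ p^{σ−1}}. -/
/-!
Taking logarithms, `log M_p = τ g(p)` with `g x = x ^ σ * log x`, so
`log m_p = τ (g p - g (p - 1))`. By the mean value theorem this is `τ g'(c)` for some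
`c ∈ (p - 1, p)`, and `g'` is increasing on `[1, ∞)` when `σ ≥ 1`. Since `p / 2 ≤ p - 1` for
`p ≥ 2`, we get `τ g'(p / 2) ≤ log m_p ≤ τ g'(p)`, and exponentiating `τ g'(p / 2)` and `τ g'(p)`
gives exactly the two stated bounds.
-/

open Real Set

noncomputable section

def rpowMulLog (σ x : ℝ) : ℝ := x ^ σ * log x

def rpowMulLogDeriv (σ x : ℝ) : ℝ := x ^ (σ - 1) * (σ * log x + 1)

theorem hasDerivAt_rpowMulLog (σ : ℝ) {x : ℝ} (hx : 0 < x) :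
    HasDerivAt (rpowMulLog σ) (rpowMulLogDeriv σ x) x := by
  refine ((hasDerivAt_rpow_const (Or.inl hx.ne')).mul (hasDerivAt_log hx.ne')).congr_deriv ?_
  rw [rpowMulLogDeriv, rpow_sub_one hx.ne']
  field_simp

theorem monotoneOn_rpowMulLogDeriv {σ : ℝ} (hσ : 1 ≤ σ) :
    MonotoneOn (rpowMulLogDeriv σ) (Ici 1) := by
  intro x (hx : 1 ≤ x) y (hy : 1 ≤ y) hxy
  have hlog : 0 ≤ σ * log x + 1 := by nlinarith [log_nonneg hx]
  have hlog_le : σ * log x + 1 ≤ σ * log y + 1 := by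
    nlinarith [log_le_log (by linarith) hxy]
  exact mul_le_mul (rpow_le_rpow (by linarith) hxy (by linarith)) hlog_le hlog
    (rpow_nonneg (by linarith) _)

theorem exists_mem_Ioo_rpowMulLog_sub_eq (σ : ℝ) {x : ℝ} (hx : 1 < x) :
    ∃ c ∈ Ioo (x - 1) x, rpowMulLog σ x - rpowMulLog σ (x - 1) = rpowMulLogDeriv σ c := by
  have hderiv : ∀ y ∈ Icc (x - 1) x, HasDerivAt (rpowMulLog σ) (rpowMulLogDeriv σ y) y :=
    fun y hy => hasDerivAt_rpowMulLog σ (by linarith [hy.1])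
  obtain ⟨c, hc, hslope⟩ := exists_hasDerivAt_eq_slope (rpowMulLog σ) (rpowMulLogDeriv σ)
    (by linarith : x - 1 < x) (fun y hy => (hderiv y hy).continuousAt.continuousWithinAt)
    (fun y hy => hderiv y (Ioo_subset_Icc_self hy))
  exact ⟨c, hc, by rw [hslope]; ring⟩

theorem rpowMulLogDeriv_half_le_rpowMulLog_sub {σ : ℝ} (hσ : 1 ≤ σ) {x : ℝ} (hx : 2 ≤ x) :
    rpowMulLogDeriv σ (x / 2) ≤ rpowMulLog σ x - rpowMulLog σ (x - 1) ∧
      rpowMulLog σ x - rpowMulLog σ (x - 1) ≤ rpowMulLogDeriv σ x := by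
  obtain ⟨c, ⟨hc₁, hc₂⟩, hsub⟩ := exists_mem_Ioo_rpowMulLog_sub_eq σ (by linarith : 1 < x)
  rw [hsub]
  have hmono := monotoneOn_rpowMulLogDeriv hσ
  exact ⟨hmono (mem_Ici.2 (by linarith)) (mem_Ici.2 (by linarith)) (by linarith),
    hmono (mem_Ici.2 (by linarith)) (mem_Ici.2 (by linarith)) hc₂.le⟩

theorem rpow_mul_rpow_eq_exp (τ σ : ℝ) {x : ℝ} (hx : 0 < x) :
    x ^ (τ * x ^ σ) = exp (τ * rpowMulLog σ x) := by
  rw [rpow_def_of_pos hx, rpowMulLog]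
  ring_nf

theorem exp_mul_rpowMulLogDeriv (τ σ : ℝ) {x : ℝ} (hx : 0 < x) :
    exp (τ * rpowMulLogDeriv σ x) = exp (τ * x ^ (σ - 1)) * x ^ (τ * σ * x ^ (σ - 1)) := by
  rw [rpow_def_of_pos hx (τ * σ * _), ← exp_add, rpowMulLogDeriv]
  ring_nf

theorem exp_mul_rpowMulLogDeriv_half (τ σ : ℝ) {x : ℝ} (hx : 0 < x) :
    exp (τ * rpowMulLogDeriv σ (x / 2)) =
      (exp 1 / 2 ^ σ) ^ (τ * x ^ (σ - 1) / 2 ^ (σ - 1)) *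
        x ^ (τ * σ * x ^ (σ - 1) / 2 ^ (σ - 1)) := by
  have h2σ : (0 : ℝ) < 2 ^ σ := by positivity
  rw [rpow_def_of_pos (div_pos (exp_pos 1) h2σ), rpow_def_of_pos hx (τ * σ * _ / _), ← exp_add,
    log_div (exp_ne_zero 1) h2σ.ne', log_exp, log_rpow two_pos, rpowMulLogDeriv,
    div_rpow hx.le zero_le_two, log_div hx.ne' two_ne_zero]
  ring_nf

end

theorem stmt_10_general (τ σ : ℝ) (hτ : 0 < τ) (hσ : 1 < σ) (M : ℕ → ℝ) (m : ℕ → ℝ)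
    (hM : ∀ p : ℕ, 1 ≤ p → M p = (p : ℝ) ^ (τ * (p : ℝ) ^ σ))
    (hm : ∀ p : ℕ, 1 ≤ p → m p = M p / M (p - 1)) :
    ∀ p : ℕ, 2 ≤ p →
      (Real.exp 1 / (2 : ℝ) ^ σ) ^ (τ * (p : ℝ) ^ (σ - 1) / (2 : ℝ) ^ (σ - 1)) *
          (p : ℝ) ^ (τ * σ * (p : ℝ) ^ (σ - 1) / (2 : ℝ) ^ (σ - 1)) ≤ m p ∧
      m p ≤ Real.exp (τ * (p : ℝ) ^ (σ - 1)) * (p : ℝ) ^ (τ * σ * (p : ℝ) ^ (σ - 1)) := by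
  intro p hp
  have hp2 : (2 : ℝ) ≤ p := by exact_mod_cast hp
  have hmp : m p = exp (τ * (rpowMulLog σ p - rpowMulLog σ (p - 1))) := by
    rw [hm p (by omega), hM p (by omega), hM (p - 1) (by omega), Nat.cast_sub (by omega),
      Nat.cast_one, rpow_mul_rpow_eq_exp τ σ (by linarith),
      rpow_mul_rpow_eq_exp τ σ (by linarith), ← exp_sub, mul_sub]
  obtain ⟨hlower, hupper⟩ := rpowMulLogDeriv_half_le_rpowMulLog_sub hσ.le hp2
  rw [hmp, ← exp_mul_rpowMulLogDeriv_half τ σ (by linarith),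
    ← exp_mul_rpowMulLogDeriv τ σ (by linarith), exp_le_exp, exp_le_exp]
  exact ⟨mul_le_mul_of_nonneg_left hlower hτ.le, mul_le_mul_of_nonneg_left hupper hτ.le⟩

/-- Bounds on m_p = M_p/M_{p−1} for M_p = p^{τ p^σ}, for p ≥ 2. -/
theorem stmt_10 (τ σ : ℝ) (hτ : 0 < τ) (hσ : 1 < σ) (M : ℕ → ℝ) (m : ℕ → ℝ)
    (hM0 : M 0 = 1)
    (hM : ∀ p : ℕ, 1 ≤ p → M p = (p : ℝ) ^ (τ * (p : ℝ) ^ σ))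
    (hm : ∀ p : ℕ, 1 ≤ p → m p = M p / M (p - 1)) :
    ∀ p : ℕ, 2 ≤ p →
      (Real.exp 1 / (2 : ℝ) ^ σ) ^ (τ * (p : ℝ) ^ (σ - 1) / (2 : ℝ) ^ (σ - 1)) *
          (p : ℝ) ^ (τ * σ * (p : ℝ) ^ (σ - 1) / (2 : ℝ) ^ (σ - 1)) ≤ m p ∧
      m p ≤ Real.exp (τ * (p : ℝ) ^ (σ - 1)) * (p : ℝ) ^ (τ * σ * (p : ℝ) ^ (σ - 1)) :=
  stmt_10_general τ σ hτ hσ M m hM hm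
end

section
/- For 1 < σ ≤ 2, τ > 0, h > 0, there exist constants A₁ > 0 and B₁ ∈ ℝ such that T_{τ,σ,h}(k) ≤ A₁ · (ln_+ k)^{σ/(σ−1)} + B₁ for all k > 0, where T_{τ,σ,h}(k) = sup_{p∈ℕ} ln_+(h^{p^σ} k^p / p^{τ p^σ}). -/
/-!
Write `L = ln_+ k`. For `p ≥ 1` the logarithm of the `p`-th term is
`p^σ (ln h - τ ln p) + p ln k`. Young's inequality with the conjugate exponents `σ` and
`σ' = σ/(σ-1)` gives `p L ≤ p^σ/σ + L^σ'/σ'`, and what is left, `p^σ (ln h + 1/σ - τ ln p)`,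
is bounded above uniformly in `p` because the logarithmic factor becomes negative once `p`
is large.
-/

open Real

lemma Real.rpow_mul_sub_mul_log_le {σ τ c x : ℝ} (hσ : 0 ≤ σ) (hτ : 0 < τ) (hx : 1 ≤ x) :
    x ^ σ * (c - τ * log x) ≤ exp (c / τ) ^ σ * max c 0 := by
  have hlog : 0 ≤ log x := log_nonneg hx
  rcases le_or_gt (c - τ * log x) 0 with hneg | hpos
  · exact (mul_nonpos_of_nonneg_of_nonpos (by positivity) hneg).trans (by positivity)
  · have hx_le : x ≤ exp (c / τ) := by
      rw [← exp_log (by linarith : 0 < x), exp_le_exp, le_div_iff₀ hτ]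
      linarith
    gcongr
    nlinarith [le_max_left c 0]

lemma log_rpow_mul_pow_div_rpow {σ τ h k : ℝ} (hh : 0 < h) (hk : 0 < k) {p : ℕ} (hp : 0 < p) :
    log (h ^ ((p : ℝ) ^ σ) * k ^ p / (p : ℝ) ^ (τ * (p : ℝ) ^ σ))
      = (p : ℝ) ^ σ * (log h - τ * log p) + p * log k := by
  have hp' : (0 : ℝ) < p := by exact_mod_cast hp
  rw [log_div (by positivity) (by positivity), log_mul (by positivity) (by positivity),
    log_rpow hh, log_pow, log_rpow hp']
  ring

lemma log_rpow_mul_pow_div_rpow_le {σ τ h k : ℝ} (hσ : 1 < σ) (hτ : 0 < τ) (hh : 0 < h)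
    (hk : 0 < k) {p : ℕ} (hp : 0 < p) :
    log (h ^ ((p : ℝ) ^ σ) * k ^ p / (p : ℝ) ^ (τ * (p : ℝ) ^ σ))
      ≤ (σ / (σ - 1))⁻¹ * max 0 (log k) ^ (σ / (σ - 1))
        + exp ((log h + σ⁻¹) / τ) ^ σ * max (log h + σ⁻¹) 0 := by
  set L := max 0 (log k)
  have hp1 : (1 : ℝ) ≤ p := by exact_mod_cast hp
  have young : (p : ℝ) * L ≤ (p : ℝ) ^ σ / σ + L ^ (σ / (σ - 1)) / (σ / (σ - 1)) :=
    young_inequality_of_nonneg (by positivity) (le_max_left _ _)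
      (HolderConjugate.conjExponent hσ)
  rw [div_eq_inv_mul _ σ, div_eq_inv_mul (L ^ (σ / (σ - 1)))] at young
  have hlogk : (p : ℝ) * log k ≤ p * L := by gcongr; exact le_max_right _ _
  have hbdd := rpow_mul_sub_mul_log_le (σ := σ) (c := log h + σ⁻¹) (by linarith) hτ hp1
  rw [log_rpow_mul_pow_div_rpow hh hk hp]
  linarith

theorem stmt_19_general (τ σ h : ℝ) (hτ : 0 < τ) (hσ1 : 1 < σ) (hh : 0 < h)
    (M : ℕ → ℝ) (hM0 : M 0 = 1)
    (hM : ∀ p : ℕ, 1 ≤ p → M p = (p : ℝ) ^ (τ * (p : ℝ) ^ σ))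
    (T : ℝ → ℝ)
    (hT : ∀ k : ℝ, T k = ⨆ p : ℕ, max 0 (Real.log (h ^ ((p : ℝ) ^ σ) * k ^ p / M p))) :
    ∃ A₁ : ℝ, 0 < A₁ ∧ ∃ B₁ : ℝ, ∀ k : ℝ, 0 < k →
      T k ≤ A₁ * (max 0 (Real.log k)) ^ (σ / (σ - 1)) + B₁ := by
  have hσ' : 0 < σ / (σ - 1) := div_pos (by linarith) (by linarith)
  refine ⟨(σ / (σ - 1))⁻¹, inv_pos.mpr hσ', exp ((log h + σ⁻¹) / τ) ^ σ * max (log h + σ⁻¹) 0,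
    fun k hk => ?_⟩
  have hbound_nonneg : 0 ≤ (σ / (σ - 1))⁻¹ * max 0 (log k) ^ (σ / (σ - 1))
      + exp ((log h + σ⁻¹) / τ) ^ σ * max (log h + σ⁻¹) 0 := by
    have := le_max_left 0 (log k)
    positivity
  rw [hT k]
  refine ciSup_le fun p => max_le hbound_nonneg ?_
  rcases Nat.eq_zero_or_pos p with rfl | hp
  · simpa [hM0, zero_rpow (by positivity : σ ≠ 0)] using hbound_nonneg
  · rw [hM p hp]
    exact log_rpow_mul_pow_div_rpow_le hσ1 hτ hh hk hp

/-- For 1 < σ ≤ 2, τ > 0, h > 0, there are A₁ > 0, B₁ ∈ ℝ with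
    T_{τ,σ,h}(k) ≤ A₁·(ln_+ k)^{σ/(σ−1)} + B₁ for all k > 0. -/
theorem stmt_19 (τ σ h : ℝ) (hτ : 0 < τ) (hσ1 : 1 < σ) (hσ2 : σ ≤ 2) (hh : 0 < h)
    (M : ℕ → ℝ) (hM0 : M 0 = 1)
    (hM : ∀ p : ℕ, 1 ≤ p → M p = (p : ℝ) ^ (τ * (p : ℝ) ^ σ))
    (T : ℝ → ℝ)
    (hT : ∀ k : ℝ, T k = ⨆ p : ℕ, max 0 (Real.log (h ^ ((p : ℝ) ^ σ) * k ^ p / M p))) :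
    ∃ A₁ : ℝ, 0 < A₁ ∧ ∃ B₁ : ℝ, ∀ k : ℝ, 0 < k →
      T k ≤ A₁ * (max 0 (Real.log k)) ^ (σ / (σ - 1)) + B₁ :=
  stmt_19_general τ σ h hτ hσ1 hh M hM0 hM T hT
end
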